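/- Let c, m > 0 and θ ∈ ℝ, and define γ : ℝ → ℝ³ by γ(s) = m·e^{(cos θ/√(1+c²))·s}·(c·cos((sin θ/c)·s), c·sin((sin θ/c)·s), 1). Then for all s: ⟨γ'(s), γ(s)⟩_{H,γ(s)}/‖γ(s)‖_{H,γ(s)} = cos θ and ⟨γ'(s), W(γ(s))⟩_{H,γ(s)}/‖W(γ(s))‖_{H,γ(s)} = sin θ, where W(p) = (−p₂, p₁, 0). Hence γ is simultaneously a helix with axis the hyperbolic-rotation Killing field V(p) = p and angle θ, and a helix with axis the elliptic-rotation Killing field W and complementary angle π/2 − θ. -/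

import Mathlib

open Real
open scoped RealInnerProductSpace

/-- A point/vector of Euclidean 3-space. -/
noncomputable def v3 (x y z : ℝ) : EuclideanSpace ℝ (Fin 3) := !₂[x, y, z]

/-- The rotational Killing vector field W(p) = (−p₂, p₁, 0). -/
noncomputable def W (p : EuclideanSpace ℝ (Fin 3)) : EuclideanSpace ℝ (Fin 3) :=
  v3 (-(p 1)) (p 0) 0

/-- Hyperbolic (upper half-space) inner product of u and v at the point p. -/
noncomputable def hInner (p u v : EuclideanSpace ℝ (Fin 3)) : ℝ := ⟪u, v⟫ / (p 2) ^ 2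

/-- Hyperbolic (upper half-space) norm of v at the point p. -/
noncomputable def hNorm (p v : EuclideanSpace ℝ (Fin 3)) : ℝ := ‖v‖ / p 2

/-- Covariant acceleration ∇_{γ'}γ' of a hyperbolic unit-speed curve in the
upper half-space model: A(s) = γ''(s) − (2γ₃'(s)/γ₃(s))·γ'(s) + (‖γ'(s)‖ₑ²/γ₃(s))·e₃. -/
noncomputable def hAccel (γ : ℝ → EuclideanSpace ℝ (Fin 3)) (s : ℝ) :
    EuclideanSpace ℝ (Fin 3) :=
  deriv (deriv γ) s - (2 * deriv (fun t => γ t 2) s / γ s 2) • deriv γ s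
    + (‖deriv γ s‖ ^ 2 / γ s 2) • v3 0 0 1

/-! The helix is the orbit `s ↦ exp(s (a V + b W)) p₀` of the Killing field `a V + b W`
through `p₀ = m (c, 0, 1)`, so `γ' = a γ + b W(γ)`. As `V(p) = p` and `W(p)` are Euclidean
orthogonal, the hyperbolic cosines of the angles of `γ'` with `V` and `W` are
`a ‖γ‖ / γ₃` and `b ‖W γ‖ / γ₃`; both ratios are constant along the orbit, equal to
`√(1 + c²)` and `c`. -/

section Vectors

lemma smul_v3 (r x y z : ℝ) : r • v3 x y z = v3 (r * x) (r * y) (r * z) := by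
  ext i; fin_cases i <;> simp [v3]

lemma v3_eq_sum (x y z : ℝ) : v3 x y z = x • v3 1 0 0 + y • v3 0 1 0 + z • v3 0 0 1 := by
  ext i; fin_cases i <;> simp [v3]

lemma norm_v3 (x y z : ℝ) : ‖v3 x y z‖ = √(x ^ 2 + y ^ 2 + z ^ 2) := by
  simp [EuclideanSpace.norm_eq, v3, Fin.sum_univ_three]

lemma W_v3 (x y z : ℝ) : W (v3 x y z) = v3 (-y) x 0 := rfl

lemma W_smul (r : ℝ) (p : EuclideanSpace ℝ (Fin 3)) : W (r • p) = r • W p := by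
  ext i; fin_cases i <;> simp [W, v3]

lemma inner_W_self (p : EuclideanSpace ℝ (Fin 3)) : ⟪W p, p⟫ = 0 := by
  simp only [W, v3, PiLp.inner_apply, RCLike.inner_apply, conj_trivial, Fin.sum_univ_three,
    Matrix.cons_val_zero, Matrix.cons_val_one, Matrix.cons_val]
  ring

lemma hasDerivAt_v3 {x y z : ℝ → ℝ} {x' y' z' s : ℝ}
    (hx : HasDerivAt x x' s) (hy : HasDerivAt y y' s) (hz : HasDerivAt z z' s) :
    HasDerivAt (fun t => v3 (x t) (y t) (z t)) (v3 x' y' z') s := by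
  simp only [v3_eq_sum x', v3_eq_sum (x _)]
  exact ((hx.smul_const _).add (hy.smul_const _)).add (hz.smul_const _)

end Vectors

lemma hInner_div_hNorm (p u v : EuclideanSpace ℝ (Fin 3)) :
    hInner p u v / hNorm p v = ⟪u, v⟫ / (‖v‖ * p 2) := by
  rcases eq_or_ne (p 2) 0 with hp | hp
  · simp [hInner, hNorm, hp]
  · rw [hInner, hNorm, div_div_eq_mul_div, sq, mul_comm ‖v‖, ← div_div, ← div_div,
      div_mul_cancel₀ _ hp]

lemma hInner_smul_add_smul_div_hNorm {p v w : EuclideanSpace ℝ (Fin 3)} (h : ⟪w, v⟫ = 0)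
    (a b : ℝ) : hInner p (a • v + b • w) v / hNorm p v = a * ‖v‖ / p 2 := by
  rw [hInner_div_hNorm, inner_add_left, real_inner_smul_left, real_inner_smul_left, h,
    real_inner_self_eq_norm_sq, mul_zero, add_zero]
  rcases eq_or_ne ‖v‖ 0 with hv | hv
  · simp [hv]
  · field_simp

section Helix

variable (m a b c : ℝ)

noncomputable def helix (s : ℝ) : EuclideanSpace ℝ (Fin 3) :=
  (m * exp (a * s)) • v3 (c * cos (b * s)) (c * sin (b * s)) 1

lemma hasDerivAt_helix (s : ℝ) :
    HasDerivAt (helix m a b c) (a • helix m a b c s + b • W (helix m a b c s)) s := by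
  have hlin : ∀ k : ℝ, HasDerivAt (fun t => k * t) k s := fun k => by
    simpa using (hasDerivAt_id s).const_mul k
  have hf : HasDerivAt (fun t => m * exp (a * t)) (a * (m * exp (a * s))) s :=
    ((hlin a).exp.const_mul m).congr_deriv (by ring)
  have hp : HasDerivAt (fun t => v3 (c * cos (b * t)) (c * sin (b * t)) 1)
      (b • W (v3 (c * cos (b * s)) (c * sin (b * s)) 1)) s := by
    rw [W_v3, smul_v3]
    refine hasDerivAt_v3 (((hlin b).cos.const_mul c).congr_deriv (by ring))
      (((hlin b).sin.const_mul c).congr_deriv (by ring)) ((hasDerivAt_const s 1).congr_deriv ?_)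
    ring
  refine (hf.smul hp).congr_deriv ?_
  simp only [helix, W_smul]
  module

variable {m}

lemma helix_two (s : ℝ) : helix m a b c s 2 = m * exp (a * s) := by
  simp [helix, v3]

lemma norm_helix (hm : 0 ≤ m) (s : ℝ) :
    ‖helix m a b c s‖ = m * exp (a * s) * √(1 + c ^ 2) := by
  have h : (c * cos (b * s)) ^ 2 + (c * sin (b * s)) ^ 2 + 1 ^ 2 = 1 + c ^ 2 := by
    linear_combination c ^ 2 * cos_sq_add_sin_sq (b * s)
  rw [helix, norm_smul, norm_v3, h, Real.norm_of_nonneg (by positivity)]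

lemma norm_W_helix (hm : 0 ≤ m) (hc : 0 ≤ c) (s : ℝ) :
    ‖W (helix m a b c s)‖ = m * exp (a * s) * c := by
  have h : (-(c * sin (b * s))) ^ 2 + (c * cos (b * s)) ^ 2 + 0 ^ 2 = c ^ 2 := by
    linear_combination c ^ 2 * sin_sq_add_cos_sq (b * s)
  rw [helix, W_smul, W_v3, norm_smul, norm_v3, h, sqrt_sq hc, Real.norm_of_nonneg (by positivity)]

end Helix

/-- The helix γ(s) = m·e^{(cos θ/√(1+c²))s}·(c cos((sin θ/c)s),
c sin((sin θ/c)s), 1) makes constant hyperbolic angle θ with the hyperbolic-rotation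
Killing field V(p) = p and simultaneously the complementary constant hyperbolic angle
π/2 − θ with the elliptic-rotation Killing field W. -/
theorem stmt_14 (c m θ : ℝ) (hc : 0 < c) (hm : 0 < m)
    (γ : ℝ → EuclideanSpace ℝ (Fin 3))
    (hγ : γ = fun s => (m * Real.exp ((Real.cos θ / Real.sqrt (1 + c ^ 2)) * s)) •
        v3 (c * Real.cos ((Real.sin θ / c) * s)) (c * Real.sin ((Real.sin θ / c) * s)) 1) :
    (∀ s, hInner (γ s) (deriv γ s) (γ s) / hNorm (γ s) (γ s) = Real.cos θ) ∧
    (∀ s, hInner (γ s) (deriv γ s) (W (γ s)) / hNorm (γ s) (W (γ s)) = Real.sin θ) := by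
  set a := cos θ / √(1 + c ^ 2)
  set b := sin θ / c
  have hγ' : γ = helix m a b c := hγ
  have hderiv (s : ℝ) : deriv γ s = a • γ s + b • W (γ s) := by
    rw [hγ']; exact (hasDerivAt_helix m a b c s).deriv
  have hpos (s : ℝ) : 0 < m * exp (a * s) := by positivity
  refine ⟨fun s => ?_, fun s => ?_⟩
  · rw [hderiv, hInner_smul_add_smul_div_hNorm (inner_W_self _), hγ', norm_helix a b c hm.le,
      helix_two, mul_div_assoc, mul_div_cancel_left₀ _ (hpos s).ne',
      div_mul_cancel₀ _ (sqrt_pos.2 (by positivity)).ne']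
  · rw [hderiv, add_comm,
      hInner_smul_add_smul_div_hNorm ((real_inner_comm _ _).trans (inner_W_self _)), hγ',
      norm_W_helix a b c hm.le hc.le, helix_two, mul_div_assoc,
      mul_div_cancel_left₀ _ (hpos s).ne', div_mul_cancel₀ _ hc.ne']
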